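/- arXiv:1107.4620 — 6 statements merged into one kernel-verified Lean document; each statement's English description precedes it below -/
import Mathlib

section
/- Let f : X → Y be a non-expansive map between nonempty finite metric spaces, and let X ∪ {a} be a one-point metric extension of X. Define d(y,b) = min over x ∈ X of (d(y,f(x)) + d(x,a)) for y ∈ Y. Then d defines a metric on Y ∪ {b} extending the metric on Y. -/
/-- The candidate distance on `Y ∪ {b}` (encoded as `Option Y`, with `none` playing
the role of the new point `b`), where `dA x` denotes the distance `d(x,a)` in the
one-point metric extension `X ∪ {a}`. -/
noncomputable def extDist {X Y : Type} [MetricSpace X] [Fintype X] [Nonempty X]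
    [MetricSpace Y] (f : X → Y) (dA : X → ℝ) : Option Y → Option Y → ℝ
  | some y, some y' => dist y y'
  | some y, none => Finset.univ.inf' Finset.univ_nonempty fun x => dist y (f x) + dA x
  | none, some y => Finset.univ.inf' Finset.univ_nonempty fun x => dist y (f x) + dA x
  | none, none => 0

section

variable {X Y : Type} [MetricSpace X] [Fintype X] [Nonempty X] [MetricSpace Y]
  {f : X → Y} {dA : X → ℝ}

theorem extDist_none_some (y : Y) : extDist f dA none (some y) = extDist f dA (some y) none := rfl

theorem extDist_some_none_le (y : Y) (x : X) :
    extDist f dA (some y) none ≤ dist y (f x) + dA x :=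
  Finset.inf'_le _ (Finset.mem_univ x)

theorem extDist_exists_some_none_eq (y : Y) :
    ∃ x : X, extDist f dA (some y) none = dist y (f x) + dA x := by
  obtain ⟨x, -, hx⟩ := Finset.exists_mem_eq_inf' Finset.univ_nonempty
    (fun x => dist y (f x) + dA x)
  exact ⟨x, hx⟩

theorem extDist_some_none_pos (hpos : ∀ x, 0 < dA x) (y : Y) :
    0 < extDist f dA (some y) none := by
  obtain ⟨x, hx⟩ := extDist_exists_some_none_eq (f := f) (dA := dA) y
  rw [hx]
  exact add_pos_of_nonneg_of_pos dist_nonneg (hpos x)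

theorem extDist_some_none_le_dist_add (y y' : Y) :
    extDist f dA (some y) none ≤ dist y y' + extDist f dA (some y') none := by
  obtain ⟨x, hx⟩ := extDist_exists_some_none_eq (f := f) (dA := dA) y'
  calc extDist f dA (some y) none ≤ dist y (f x) + dA x := extDist_some_none_le y x
    _ ≤ dist y y' + (dist y' (f x) + dA x) := by linarith [dist_triangle y y' (f x)]
    _ = dist y y' + extDist f dA (some y') none := by rw [hx]

/-- The path `y → f x → f x' → y'` is no longer than `y → b → y'`, since `f` is
non-expansive and `d(x, x') ≤ d(x, a) + d(a, x')`. -/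
theorem dist_le_extDist_some_none_add (hf : ∀ p q : X, dist (f p) (f q) ≤ dist p q)
    (htri : ∀ x x' : X, dist x x' ≤ dA x + dA x') (y y' : Y) :
    dist y y' ≤ extDist f dA (some y) none + extDist f dA (some y') none := by
  obtain ⟨x, hx⟩ := extDist_exists_some_none_eq (f := f) (dA := dA) y
  obtain ⟨x', hx'⟩ := extDist_exists_some_none_eq (f := f) (dA := dA) y'
  rw [hx, hx']
  calc dist y y' ≤ dist y (f x) + dist (f x) (f x') + dist (f x') y' :=
        dist_triangle4 y (f x) (f x') y'
    _ ≤ dist y (f x) + (dA x + dA x') + dist y' (f x') := by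
        rw [dist_comm (f x') y']
        linarith [hf x x', htri x x']
    _ = _ := by ring

end

theorem stmt0_general {X Y : Type} [MetricSpace X] [Fintype X] [Nonempty X] [MetricSpace Y]
    (f : X → Y) (hf : ∀ p q : X, dist (f p) (f q) ≤ dist p q)
    (dA : X → ℝ) (hpos : ∀ x, 0 < dA x)
    (htri1 : ∀ x x' : X, dist x x' ≤ dA x + dA x') :
    (∀ y y' : Y, extDist f dA (some y) (some y') = dist y y') ∧
    (∀ p q : Option Y, extDist f dA p q = 0 ↔ p = q) ∧
    (∀ p q : Option Y, extDist f dA p q = extDist f dA q p) ∧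
    (∀ p q r : Option Y, extDist f dA p r ≤ extDist f dA p q + extDist f dA q r) := by
  have hb_pos := extDist_some_none_pos (f := f) hpos
  refine ⟨fun y y' => rfl, ?_, ?_, ?_⟩
  · rintro (_ | p) (_ | q)
    · simp [extDist]
    · simpa [extDist_none_some] using (hb_pos q).ne'
    · simpa using (hb_pos p).ne'
    · simp [extDist]
  · rintro (_ | p) (_ | q) <;> simp [extDist, dist_comm]
  · rintro (_ | p) (_ | q) (_ | r)
    · simp [extDist]
    · exact (zero_add _).ge
    · exact (add_pos (hb_pos q) (hb_pos q)).le
    · exact (extDist_some_none_le_dist_add r q).trans_eq (by rw [dist_comm, add_comm]; rfl)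
    · exact (add_zero _).ge
    · exact dist_le_extDist_some_none_add hf htri1 p r
    · exact extDist_some_none_le_dist_add p q
    · exact dist_triangle p q r

/-- the formula `d(y,b) = min_{x ∈ X} (d(y,f(x)) + d(x,a))` defines a
metric on `Y ∪ {b}` extending the metric of `Y`. -/
theorem stmt0 {X Y : Type} [MetricSpace X] [Fintype X] [Nonempty X] [MetricSpace Y]
    (f : X → Y) (hf : ∀ p q : X, dist (f p) (f q) ≤ dist p q)
    (dA : X → ℝ) (hpos : ∀ x, 0 < dA x)
    (htri1 : ∀ x x' : X, dist x x' ≤ dA x + dA x')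
    (htri2 : ∀ x x' : X, dA x ≤ dist x x' + dA x') :
    (∀ y y' : Y, extDist f dA (some y) (some y') = dist y y') ∧
    (∀ p q : Option Y, extDist f dA p q = 0 ↔ p = q) ∧
    (∀ p q : Option Y, extDist f dA p q = extDist f dA q p) ∧
    (∀ p q r : Option Y, extDist f dA p r ≤ extDist f dA p q + extDist f dA q r) :=
  stmt0_general f hf dA hpos htri1
end

section
/- A metric space X is finitely hyperconvex if and only if it is injective with respect to isometric embeddings of finite metric spaces: for every finite metric space T, subspace S ⊆ T, and non-expansive map f : S → X, there exists a non-expansive map f' : T → X extending f. -/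
/-!
Forward: a non-expansive map from a finite set can be extended one point `t` at a time, since
the balls `B(f s, d(t, s))` satisfy the pairwise condition and so meet in a point we send `t` to.
Backward: given balls `B(x i, r i)`, adjoin to `A = {x i}` a new point at distance
`ρ a = min_i (r i + d(a, x i))` from each `a ∈ A`; extending the inclusion `A → X` to this
finite metric space sends the new point into every ball.
-/

/-- A metric space is finitely hyperconvex if every finite family of closed balls
`B(x i, r i)` with `d(x i, x j) ≤ r i + r j` for all `i, j` has a common point. -/
def FinitelyHyperconvex (X : Type) [MetricSpace X] : Prop :=
  ∀ (n : ℕ) (x : Fin n → X) (r : Fin n → ℝ),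
    (∀ i j, dist (x i) (x j) ≤ r i + r j) → ∃ z : X, ∀ i, dist z (x i) ≤ r i

open Set Function

def optionDist {A : Type*} [Dist A] (ρ : A → ℝ) : Option A → Option A → ℝ
  | none, none => 0
  | none, some a => ρ a
  | some a, none => ρ a
  | some a, some b => dist a b

abbrev optionMetricSpace {A : Type*} [MetricSpace A] (ρ : A → ℝ) (hρ_pos : ∀ a, 0 < ρ a)
    (hρ_le : ∀ a b, ρ a ≤ dist a b + ρ b) (hdist_le : ∀ a b, dist a b ≤ ρ a + ρ b) :
    MetricSpace (Option A) where
  dist := optionDist ρ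
  dist_self := by rintro (_ | a) <;> simp [optionDist]
  dist_comm := by rintro (_ | a) (_ | b) <;> simp [optionDist, dist_comm]
  dist_triangle := by
    rintro (_ | a) (_ | b) (_ | c) <;> simp only [optionDist]
    iterate 2 simp
    · linarith [hρ_pos b]
    · rw [dist_comm]; linarith [hρ_le c b]
    · linarith [hρ_pos a]
    · exact hdist_le a c
    · exact hρ_le a b
    · exact dist_triangle a b c
  eq_of_dist_eq_zero := by
    rintro (_ | a) (_ | b) h <;> simp only [optionDist] at h
    · rfl
    · exact absurd h (hρ_pos b).ne'
    · exact absurd h (hρ_pos a).ne'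
    · rw [dist_eq_zero.1 h]

section distBound

variable {X ι : Type*} [PseudoMetricSpace X] (x : ι → X) (r : ι → ℝ)

/-- Any common point `z` of the balls `B(x i, r i)` satisfies `dist z a ≤ distBound x r a`. -/
noncomputable def distBound (a : X) : ℝ := ⨅ i, r i + dist a (x i)

variable [Finite ι]

theorem distBound_le (a : X) (i : ι) : distBound x r a ≤ r i + dist a (x i) :=
  ciInf_le (finite_range _).bddBelow i

theorem distBound_self_le (i : ι) : distBound x r (x i) ≤ r i := by
  simpa using distBound_le x r (x i) i

variable [Nonempty ι]

theorem exists_distBound_eq (a : X) : ∃ i, distBound x r a = r i + dist a (x i) :=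
  (exists_eq_ciInf_of_finite).imp fun _ h => h.symm

theorem distBound_pos (hr : ∀ i, 0 < r i) (a : X) : 0 < distBound x r a := by
  obtain ⟨i, hi⟩ := exists_distBound_eq x r a
  rw [hi]
  exact add_pos_of_pos_of_nonneg (hr i) dist_nonneg

theorem distBound_le_dist_add (a b : X) : distBound x r a ≤ dist a b + distBound x r b := by
  obtain ⟨j, hj⟩ := exists_distBound_eq x r b
  calc distBound x r a ≤ r j + dist a (x j) := distBound_le x r a j
    _ ≤ dist a b + (r j + dist b (x j)) := by linarith [dist_triangle a b (x j)]
    _ = dist a b + distBound x r b := by rw [hj]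

theorem dist_le_distBound_add (hr : ∀ i j, dist (x i) (x j) ≤ r i + r j) (a b : X) :
    dist a b ≤ distBound x r a + distBound x r b := by
  obtain ⟨i, hi⟩ := exists_distBound_eq x r a
  obtain ⟨j, hj⟩ := exists_distBound_eq x r b
  rw [hi, hj]
  linarith [dist_triangle4 a (x i) (x j) b, hr i j, dist_comm b (x j)]

end distBound

namespace FinitelyHyperconvex

variable {X : Type} [MetricSpace X] (hX : FinitelyHyperconvex X)
include hX

theorem exists_forall_dist_le {ι : Type*} [Finite ι] (y : ι → X) (r : ι → ℝ)
    (h : ∀ i j, dist (y i) (y j) ≤ r i + r j) : ∃ z, ∀ i, dist z (y i) ≤ r i := by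
  obtain ⟨n, ⟨e⟩⟩ := Finite.exists_equiv_fin ι
  obtain ⟨z, hz⟩ := hX n (y ∘ e.symm) (r ∘ e.symm) fun i j => h _ _
  exact ⟨z, fun i => by simpa using hz (e i)⟩

theorem exists_lipschitzOnWith_insert {T : Type*} [PseudoMetricSpace T] {s : Set T}
    (hs : s.Finite) {g : T → X} (hg : LipschitzOnWith 1 g s) (t : T) :
    ∃ g' : T → X, LipschitzOnWith 1 g' (insert t s) ∧ EqOn g' g s := by
  classical
  by_cases ht : t ∈ s
  · exact ⟨g, by rwa [insert_eq_of_mem ht], eqOn_refl _ _⟩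
  have : Finite s := hs.to_subtype
  have hg' (p q : T) (hp : p ∈ s) (hq : q ∈ s) : dist (g p) (g q) ≤ dist p q := by
    simpa using hg.dist_le_mul p hp q hq
  obtain ⟨z, hz⟩ := hX.exists_forall_dist_le (fun p : s => g p) (fun p => dist t p)
    fun p q => (hg' p q p.2 q.2).trans (dist_triangle_left _ _ t)
  have hne {p : T} (hp : p ∈ s) : p ≠ t := ne_of_mem_of_not_mem hp ht
  refine ⟨update g t z, LipschitzOnWith.mk_one ?_, fun p hp => update_of_ne (hne hp) _ _⟩
  rintro p (rfl | hp) q (rfl | hq)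
  · simp
  · simpa [update_of_ne (hne hq)] using hz ⟨q, hq⟩
  · simpa [update_of_ne (hne hp), dist_comm] using hz ⟨p, hp⟩
  · simpa [update_of_ne (hne hp), update_of_ne (hne hq)] using hg' p q hp hq

theorem exists_lipschitzOnWith_union {T : Type*} [PseudoMetricSpace T] {s F : Set T}
    (hs : s.Finite) (hF : F.Finite) {g : T → X} (hg : LipschitzOnWith 1 g s) :
    ∃ g' : T → X, LipschitzOnWith 1 g' (s ∪ F) ∧ EqOn g' g s := by
  induction F, hF using Set.Finite.induction_on with
  | empty => exact ⟨g, by rwa [union_empty], eqOn_refl _ _⟩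
  | @insert a F _ hF ih =>
    obtain ⟨g₁, hg₁, hg₁g⟩ := ih
    obtain ⟨g₂, hg₂, hg₂g₁⟩ := hX.exists_lipschitzOnWith_insert (hs.union hF) hg₁ a
    exact ⟨g₂, by rwa [union_insert], fun p hp => (hg₂g₁ (Or.inl hp)).trans (hg₁g hp)⟩

theorem exists_lipschitzWith_extension {T : Type*} [PseudoMetricSpace T] [Finite T]
    (S : Set T) (f : S → X) (hf : LipschitzWith 1 f) :
    ∃ g : T → X, LipschitzWith 1 g ∧ ∀ s : S, g s = f s := by
  obtain ⟨z₀, -⟩ := hX 0 Fin.elim0 Fin.elim0 fun i => i.elim0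
  set g₀ : T → X := extend Subtype.val f fun _ => z₀
  have hg₀ (s : S) : g₀ s = f s := Subtype.val_injective.extend_apply _ _ s
  have hg₀S : LipschitzOnWith 1 g₀ S := by
    rwa [lipschitzOnWith_iff_restrict, show S.domRestrict g₀ = f from funext hg₀]
  obtain ⟨g, hg, hgg₀⟩ := hX.exists_lipschitzOnWith_union S.toFinite univ.toFinite hg₀S
  rw [union_univ, lipschitzOnWith_univ] at hg
  exact ⟨g, hg, fun s => (hgg₀ s.2).trans (hg₀ s)⟩

end FinitelyHyperconvex

theorem exists_forall_dist_le_of_extension {X : Type} [MetricSpace X]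
    (h : ∀ (T : Type) [MetricSpace T] [Fintype T] (S : Set T) (f : S → X),
      (∀ p q : S, dist (f p) (f q) ≤ dist p q) →
      ∃ g : T → X, (∀ p q : T, dist (g p) (g q) ≤ dist p q) ∧ ∀ s : S, g s = f s)
    {A : Set X} [Finite A] (ρ : A → ℝ) (hρ_pos : ∀ a, 0 < ρ a)
    (hρ_le : ∀ a b, ρ a ≤ dist a b + ρ b) (hdist_le : ∀ a b, dist a b ≤ ρ a + ρ b) :
    ∃ z : X, ∀ a : A, dist z a ≤ ρ a := by
  let _ := optionMetricSpace ρ hρ_pos hρ_le hdist_le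
  let _ := Fintype.ofFinite (Option A)
  obtain ⟨g, hg, hgf⟩ := h (Option A) {o | o.isSome} (fun o => o.1.get o.2) <| by
    rintro ⟨_ | a, ⟨⟩⟩ ⟨_ | b, ⟨⟩⟩
    exact le_rfl
  refine ⟨g none, fun a => ?_⟩
  have hga : g (some a) = a := hgf ⟨some a, rfl⟩
  calc dist (g none) a = dist (g none) (g (some a)) := by rw [hga]
    _ ≤ ρ a := hg none (some a)

theorem finitelyHyperconvex_of_extension {X : Type} [MetricSpace X]
    (h : ∀ (T : Type) [MetricSpace T] [Fintype T] (S : Set T) (f : S → X),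
      (∀ p q : S, dist (f p) (f q) ≤ dist p q) →
      ∃ g : T → X, (∀ p q : T, dist (g p) (g q) ≤ dist p q) ∧ ∀ s : S, g s = f s) :
    FinitelyHyperconvex X := by
  intro n x r hr
  by_cases hr0 : ∃ j, r j = 0
  · obtain ⟨j, hj⟩ := hr0
    exact ⟨x j, fun i => by simpa [hj, dist_comm] using hr j i⟩
  have hr_pos (i : Fin n) : 0 < r i :=
    lt_of_le_of_ne (by linarith [hr i i, dist_self (x i)]) (Ne.symm fun h => hr0 ⟨i, h⟩)
  have hn (a : range x) : Nonempty (Fin n) := let ⟨i, _⟩ := a.2; ⟨i⟩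
  obtain ⟨z, hz⟩ := exists_forall_dist_le_of_extension h (fun a : range x => distBound x r a)
    (fun a => have := hn a; distBound_pos x r hr_pos a)
    (fun a b => have := hn a; distBound_le_dist_add x r a b)
    (fun a b => have := hn a; dist_le_distBound_add x r hr a b)
  exact ⟨z, fun i => (hz ⟨x i, mem_range_self i⟩).trans (distBound_self_le x r i)⟩

/-- a metric space is finitely hyperconvex iff it is injective with
respect to isometric embeddings of finite metric spaces. -/
theorem stmt4 (X : Type) [MetricSpace X] :
    FinitelyHyperconvex X ↔
      ∀ (T : Type) [MetricSpace T] [Fintype T] (S : Set T) (f : S → X),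
        (∀ p q : S, dist (f p) (f q) ≤ dist p q) →
        ∃ g : T → X, (∀ p q : T, dist (g p) (g q) ≤ dist p q) ∧ ∀ s : S, g s = f s := by
  refine ⟨fun hX T _ _ S f hf => ?_, finitelyHyperconvex_of_extension⟩
  obtain ⟨g, hg, hgf⟩ := hX.exists_lipschitzWith_extension S f (.mk_one hf)
  exact ⟨g, fun p q => by simpa using hg.dist_le_mul p q, hgf⟩
end

section
/- No K_n-free graph with n > 2 is injective with respect to embeddings of finite K_n-free graphs: if X is a graph containing no complete subgraph on n vertices, then there exist finite K_n-free graphs S ⊆ T and a graph homomorphism f : S → X admitting no homomorphic extension g : T → X (assuming X is injective for the empty embedding into K_{n−1}, i.e., X contains a copy of K_{n−1}). -/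
/-!
Let `s` be an `(n-1)`-clique of `X`. Map the edgeless graph on `s` into `X` by inclusion and embed
it, as one side, into the star `K_{1,n-1}`, which is triangle-free. An extension to the star would
send the centre to a common neighbour of all of `s`, completing an `n`-clique in `X`.
-/

open SimpleGraph

namespace SimpleGraph

theorem completeBipartiteGraph_cliqueFree_three (V W : Type*) :
    (completeBipartiteGraph V W).CliqueFree 3 :=
  (CompleteBipartiteGraph.bicoloring V W).colorable.cliqueFree (by simp)

def Embedding.botInr (V W : Type*) : (⊥ : SimpleGraph W) ↪g completeBipartiteGraph V W where
  toEmbedding := Function.Embedding.inr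
  map_rel_iff' := by simp

theorem isNClique_insert_of_forall_inr {V : Type*} [DecidableEq V] {X : SimpleGraph V}
    {m : ℕ} {s : Finset V} (hs : X.IsNClique m s) (g : completeBipartiteGraph Unit s →g X)
    (hg : ∀ v : s, g (Sum.inr v) = v) :
    X.IsNClique (m + 1) (insert (g (Sum.inl ())) s) :=
  hs.insert fun v hv => by
    have hadj : (completeBipartiteGraph Unit s).Adj (.inl ()) (.inr ⟨v, hv⟩) := by simp
    simpa [hg] using g.map_rel hadj

end SimpleGraph

/-- no `K_n`-free graph with `n > 2` containing a copy of `K_{n-1}`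
is injective with respect to embeddings of finite `K_n`-free graphs: there exist
finite `K_n`-free graphs `S ↪ T` and a homomorphism `f : S → X` with no
homomorphic extension `g : T → X`. -/
theorem stmt7 {V : Type} (n : ℕ) (hn : 2 < n) (X : SimpleGraph V)
    (hfree : X.CliqueFree n)
    (hK : ∃ s : Finset V, X.IsNClique (n - 1) s) :
    ∃ (α β : Type) (_ : Fintype α) (_ : Fintype β)
      (S : SimpleGraph α) (T : SimpleGraph β),
      S.CliqueFree n ∧ T.CliqueFree n ∧
      ∃ (e : S ↪g T) (f : S →g X), ∀ g : T →g X, g.comp e.toHom ≠ f := by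
  classical
  obtain ⟨s, hs⟩ := hK
  refine ⟨s, Unit ⊕ s, inferInstance, inferInstance, ⊥, completeBipartiteGraph Unit s,
    cliqueFree_bot hn.le, (completeBipartiteGraph_cliqueFree_three _ _).mono hn,
    Embedding.botInr Unit s, ⟨Subtype.val, False.elim⟩, fun g hg => ?_⟩
  have hclique := isNClique_insert_of_forall_inr hs g fun v => DFunLike.congr_fun hg v
  exact hfree _ (by rwa [Nat.sub_add_cancel (by omega)] at hclique)
end

section
/- Any graph X that is injective with respect to embeddings of finite K_n-free graphs (n > 2) contains a complete subgraph on n vertices; hence no K_n-free graph is injective for finite K_n-free graphs. -/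
/-!
The complete bipartite graph `K_{1,k}` (a star) is triangle-free, hence `K_n`-free for `n > 2`,
and contains the edgeless graph on its `k` leaves. Extending a map of the leaves onto any `k`
vertices of `X` to the whole star sends the centre to a common neighbour of those vertices.
So every finite set of vertices of `X` has a common neighbour, and adding such neighbours one
at a time builds cliques of every size.
-/

open SimpleGraph

namespace SimpleGraph

variable {V : Type*} {X : SimpleGraph V} {n : ℕ}

def IsInjectiveForCliqueFree (n : ℕ) (X : SimpleGraph V) : Prop :=
  ∀ (α β : Type) [Fintype α] [Fintype β] (S : SimpleGraph α) (T : SimpleGraph β),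
    S.CliqueFree n → T.CliqueFree n →
      ∀ (e : S ↪g T) (f : S →g X), ∃ g : T →g X, g.comp e.toHom = f

theorem completeBipartiteGraph_cliqueFree (α β : Type*) (hn : 2 < n) :
    (completeBipartiteGraph α β).CliqueFree n := by
  have h := (CompleteBipartiteGraph.bicoloring α β).colorable
  rw [Fintype.card_bool] at h
  exact h.cliqueFree hn

def Embedding.botToCompleteBipartiteGraph (α β : Type*) :
    (⊥ : SimpleGraph β) ↪g completeBipartiteGraph α β where
  toEmbedding := Function.Embedding.inr
  map_rel_iff' := by simp

theorem IsInjectiveForCliqueFree.exists_forall_adj (hX : X.IsInjectiveForCliqueFree n)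
    (hn : 2 < n) (s : Finset V) : ∃ y, ∀ x ∈ s, X.Adj y x := by
  -- The test graphs must live in `Type`, while `V` may not, so `s` is reindexed by `Fin k`.
  let k := s.card
  obtain ⟨g, hg⟩ := hX (Fin k) (Unit ⊕ Fin k) ⊥ (completeBipartiteGraph Unit (Fin k))
    (cliqueFree_bot (by omega)) (completeBipartiteGraph_cliqueFree Unit (Fin k) hn)
    (Embedding.botToCompleteBipartiteGraph Unit (Fin k))
    ⟨fun i => s.equivFin.symm i, fun h => h.elim⟩
  refine ⟨g (.inl ()), fun x hx => ?_⟩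
  set i := s.equivFin ⟨x, hx⟩
  have hgx : g (.inr i) = x := (DFunLike.congr_fun hg i).trans (by simp [i])
  have hadj : (completeBipartiteGraph Unit (Fin k)).Adj (.inl ()) (.inr i) := by simp
  simpa only [hgx] using g.map_adj hadj

theorem exists_isNClique_of_forall_exists_adj (h : ∀ s : Finset V, ∃ y, ∀ x ∈ s, X.Adj y x)
    (n : ℕ) : ∃ s : Finset V, X.IsNClique n s := by
  classical
  induction n with
  | zero => exact ⟨∅, isNClique_empty.mpr rfl⟩
  | succ n ih =>
    obtain ⟨s, hs⟩ := ih
    obtain ⟨y, hy⟩ := h s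
    exact ⟨insert y s, hs.insert hy⟩

end SimpleGraph

/-- any graph `X` that is injective with respect to embeddings of
finite `K_n`-free graphs (`n > 2`) contains a complete subgraph on `n` vertices. -/
theorem stmt8 {V : Type} (n : ℕ) (hn : 2 < n) (X : SimpleGraph V)
    (hinj : ∀ (α β : Type) [Fintype α] [Fintype β]
      (S : SimpleGraph α) (T : SimpleGraph β), S.CliqueFree n → T.CliqueFree n →
      ∀ (e : S ↪g T) (f : S →g X), ∃ g : T →g X, g.comp e.toHom = f) :
    ∃ s : Finset V, X.IsNClique n s :=
  exists_isNClique_of_forall_exists_adj (IsInjectiveForCliqueFree.exists_forall_adj hinj hn) n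
end

section
/- Let C be a linear order, A = C ∪ {a} and B = C ∪ {b} be one-point linear order extensions with a ≠ b, and let f : A → L, g : B → L be monotone (order-preserving) maps into a linear order L with f↾C = g↾C. Then there exists a linear order W = C ∪ {a,b} extending both A and B, and a monotone map h : W → L with h↾A = f and h↾B = g. -/
/-!
Realise `W` as `A` with one new point inserted at a cut `S` of `A` (a lower set: the new point lies
above exactly the elements of `S`); the new point plays the role of `b`, and `h` sends it to `g b`.
For `c ∈ C` the cut must contain `c` exactly when `c < b` in `B`. The only freedom is the position
of `a`: it is forced below `b` when some `c ≥ a` lies below `b`, forced above `b` when some `c ≤ a`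
does not, and otherwise goes below `b` iff `f a ≤ g b`. Monotonicity of `f`, `g` and their agreement
on `C` then make `h` monotone.
-/

section CutExtension

variable {α β : Type*} [LinearOrder α] [Preorder β] (S : Set α)

def cutLE : α ⊕ Unit → α ⊕ Unit → Prop
  | .inl x, .inl y => x ≤ y
  | .inl x, .inr _ => x ∈ S
  | .inr _, .inl y => y ∉ S
  | .inr _, .inr _ => True

theorem isLinearOrder_cutLE (hS : IsLowerSet S) : IsLinearOrder (α ⊕ Unit) (cutLE S) where
  refl := by rintro (x | _) <;> simp [cutLE]
  trans := by
    rintro (x | _) (y | _) (z | _) hxy hyz <;> simp only [cutLE] at hxy hyz ⊢ <;> try assumption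
    · exact hxy.trans hyz
    · exact hS hxy hyz
    · exact le_of_not_gt fun hzx => hyz (hS hzx.le hxy)
    · exact fun hz => hxy (hS hyz hz)
  antisymm := by
    rintro (x | _) (y | _) hxy hyx <;> simp only [cutLE] at hxy hyx
    · exact congrArg Sum.inl (le_antisymm hxy hyx)
    · exact absurd hxy hyx
    · exact absurd hyx hxy
    · rfl
  total := by
    rintro (x | _) (y | _) <;> simp only [cutLE]
    · exact le_total x y
    · exact em _
    · exact (em _).symm
    · exact Or.inl trivial

theorem sumElim_le_sumElim_of_cutLE {f : α → β} {l : β} (hf : Monotone f)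
    (hS : ∀ x ∈ S, f x ≤ l) (hSc : ∀ x ∉ S, l ≤ f x) :
    ∀ u v, cutLE S u v → Sum.elim f (fun _ => l) u ≤ Sum.elim f (fun _ => l) v := by
  rintro (x | _) (y | _) huv <;> simp only [cutLE, Sum.elim_inl, Sum.elim_inr] at huv ⊢
  · exact hf huv
  · exact hS x huv
  · exact hSc y huv
  · exact le_rfl

end CutExtension

section Amalgamation

variable {C A B L : Type*} [LinearOrder C] [LinearOrder A] [LinearOrder B] [LinearOrder L]
  (iA : C ↪o A) (iB : C ↪o B) (a : A) (b : B) (f : A → L) (g : B → L)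

def amalgamationCut : Set A :=
  {x | (∃ c, x ≤ iA c ∧ iB c < b) ∨ (x ≤ a ∧ (∀ c, iA c ≤ a → iB c < b) ∧ f a ≤ g b)}

theorem isLowerSet_amalgamationCut : IsLowerSet (amalgamationCut iA iB a b f g) := by
  rintro x y hyx (⟨c, hxc, hcb⟩ | ⟨hxa, hQ⟩)
  · exact Or.inl ⟨c, hyx.trans hxc, hcb⟩
  · exact Or.inr ⟨hyx.trans hxa, hQ⟩

theorem mem_amalgamationCut_iff (c : C) :
    iA c ∈ amalgamationCut iA iB a b f g ↔ iB c < b := by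
  refine ⟨?_, fun hcb => Or.inl ⟨c, le_rfl, hcb⟩⟩
  rintro (⟨c', hcc', hc'b⟩ | ⟨hca, hbelow, -⟩)
  · exact lt_of_le_of_lt (iB.le_iff_le.2 (iA.le_iff_le.1 hcc')) hc'b
  · exact hbelow c hca

variable {iA iB a b f g}

theorem le_of_mem_amalgamationCut (hf : Monotone f) (hg : Monotone g)
    (hfg : ∀ c, f (iA c) = g (iB c)) {x : A} (hx : x ∈ amalgamationCut iA iB a b f g) :
    f x ≤ g b := by
  rcases hx with ⟨c, hxc, hcb⟩ | ⟨hxa, -, hab⟩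
  · calc f x ≤ f (iA c) := hf hxc
      _ = g (iB c) := hfg c
      _ ≤ g b := hg hcb.le
  · exact (hf hxa).trans hab

theorem le_of_notMem_amalgamationCut (hA : ∀ x : A, x ∈ Set.range iA ∨ x = a)
    (hf : Monotone f) (hg : Monotone g) (hfg : ∀ c, f (iA c) = g (iB c)) {x : A}
    (hx : x ∉ amalgamationCut iA iB a b f g) : g b ≤ f x := by
  rcases hA x with ⟨c, rfl⟩ | rfl
  · have hbc : b ≤ iB c := not_lt.1 fun hcb => hx ((mem_amalgamationCut_iff ..).2 hcb)
    calc g b ≤ g (iB c) := hg hbc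
      _ = f (iA c) := (hfg c).symm
  · by_cases hbelow : ∀ c, iA c ≤ x → iB c < b
    · exact (not_le.1 fun hxb => hx (Or.inr ⟨le_rfl, hbelow, hxb⟩)).le
    · push Not at hbelow
      obtain ⟨c, hcx, hbc⟩ := hbelow
      calc g b ≤ g (iB c) := hg hbc
        _ = f (iA c) := (hfg c).symm
        _ ≤ f x := hf hcx

end Amalgamation

theorem stmt9_general {C A B L : Type} [LinearOrder C] [LinearOrder A] [LinearOrder B]
    [LinearOrder L]
    (iA : C ↪o A) (iB : C ↪o B) (a : A) (b : B)
    (hbB : b ∉ Set.range iB)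
    (hA : ∀ x : A, x ∈ Set.range iA ∨ x = a)
    (hB : ∀ y : B, y ∈ Set.range iB ∨ y = b)
    (f : A → L) (g : B → L) (hf : Monotone f) (hg : Monotone g)
    (hfg : ∀ c : C, f (iA c) = g (iB c)) :
    ∃ (W : Type) (le : W → W → Prop), IsLinearOrder W le ∧
      ∃ (jA : A → W) (jB : B → W),
        (∀ x y : A, x ≤ y ↔ le (jA x) (jA y)) ∧
        (∀ x y : B, x ≤ y ↔ le (jB x) (jB y)) ∧
        (∀ c : C, jA (iA c) = jB (iB c)) ∧
        (∀ w : W, w ∈ Set.range jA ∨ w ∈ Set.range jB) ∧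
        ∃ h : W → L, (∀ u v : W, le u v → h u ≤ h v) ∧
          (∀ x : A, h (jA x) = f x) ∧ (∀ y : B, h (jB y) = g y) := by
  set S := amalgamationCut iA iB a b f g
  let jB : B → A ⊕ Unit := Function.extend iB (fun c => .inl (iA c)) fun _ => .inr ()
  have jB_iB (c : C) : jB (iB c) = .inl (iA c) := iB.injective.extend_apply _ _ c
  have jB_b : jB b = .inr () := Function.extend_apply' _ _ _ hbB
  have iB_ne_b (c : C) : iB c ≠ b := fun h => hbB ⟨c, h⟩
  refine ⟨A ⊕ Unit, cutLE S, isLinearOrder_cutLE S (isLowerSet_amalgamationCut ..), .inl, jB,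
    fun _ _ => Iff.rfl, ?_, fun c => (jB_iB c).symm, ?_, Sum.elim f fun _ => g b,
    sumElim_le_sumElim_of_cutLE S hf (fun _ => le_of_mem_amalgamationCut hf hg hfg)
      (fun _ => le_of_notMem_amalgamationCut hA hf hg hfg), fun _ => rfl, ?_⟩
  · intro x y
    rcases hB x with ⟨c, rfl⟩ | rfl <;> rcases hB y with ⟨c', rfl⟩ | rfl <;>
      simp only [jB_iB, jB_b, cutLE, iB.le_iff_le, iA.le_iff_le, mem_amalgamationCut_iff, S]
    · exact (iB_ne_b c).le_iff_lt
    · exact not_lt.symm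
    · exact iff_true_intro le_rfl
  · rintro (x | ⟨⟩)
    · exact .inl ⟨x, rfl⟩
    · exact .inr ⟨b, jB_b⟩
  · intro y
    rcases hB y with ⟨c, rfl⟩ | rfl
    · rw [jB_iB]
      exact hfg c
    · rw [jB_b]
      rfl

/-- given one-point linear order extensions `A = C ∪ {a}`,
`B = C ∪ {b}` of a linear order `C` and monotone maps `f : A → L`, `g : B → L`
agreeing on `C`, there is a linear order `W = C ∪ {a,b}` extending both `A` and `B`
and a monotone `h : W → L` with `h↾A = f`, `h↾B = g`. -/
theorem stmt9 {C A B L : Type} [LinearOrder C] [LinearOrder A] [LinearOrder B]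
    [LinearOrder L]
    (iA : C ↪o A) (iB : C ↪o B) (a : A) (b : B)
    (haA : a ∉ Set.range iA) (hbB : b ∉ Set.range iB)
    (hA : ∀ x : A, x ∈ Set.range iA ∨ x = a)
    (hB : ∀ y : B, y ∈ Set.range iB ∨ y = b)
    (f : A → L) (g : B → L) (hf : Monotone f) (hg : Monotone g)
    (hfg : ∀ c : C, f (iA c) = g (iB c)) :
    ∃ (W : Type) (le : W → W → Prop), IsLinearOrder W le ∧
      ∃ (jA : A → W) (jB : B → W),
        (∀ x y : A, x ≤ y ↔ le (jA x) (jA y)) ∧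
        (∀ x y : B, x ≤ y ↔ le (jB x) (jB y)) ∧
        (∀ c : C, jA (iA c) = jB (iB c)) ∧
        (∀ w : W, w ∈ Set.range jA ∨ w ∈ Set.range jB) ∧
        ∃ h : W → L, (∀ u v : W, le u v → h u ≤ h v) ∧
          (∀ x : A, h (jA x) = f x) ∧ (∀ y : B, h (jB y) = g y) :=
  stmt9_general iA iB a b hbB hA hB f g hf hg hfg
end

section
/- Every countable linear order is order-isomorphic to an increasing retract of the rationals: for every countable linear order X there exist a monotone embedding j : X → ℚ and a monotone map r : ℚ → X with r ∘ j = id_X. -/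
/-!
The lexicographic product `X ×ₗ ℚ` is a countable dense linear order without endpoints, hence
order-isomorphic to `ℚ` by Cantor's back-and-forth theorem. Under this isomorphism, `x ↦ (x, 0)`
becomes the embedding and the first projection the monotone retraction.
-/

instance Prod.Lex.countable {α β : Type*} [Countable α] [Countable β] : Countable (α ×ₗ β) :=
  inferInstanceAs (Countable (α × β))

def Prod.Lex.embedLeft {α β : Type*} [LinearOrder α] [Preorder β] (b : β) : α ↪o α ×ₗ β :=
  OrderEmbedding.ofStrictMono (fun a ↦ toLex (a, b))
    fun _ _ h ↦ Prod.Lex.toLex_strictMono (Prod.mk_lt_mk_of_lt_of_le h le_rfl)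

@[simp]
theorem Prod.Lex.fst_ofLex_embedLeft {α β : Type*} [LinearOrder α] [Preorder β] (b : β) (a : α) :
    (ofLex (embedLeft b a)).1 = a :=
  rfl

/-- every countable (nonempty) linear order is order-isomorphic to an
increasing retract of the rationals: there are a monotone embedding `j : X → ℚ` and
a monotone map `r : ℚ → X` with `r ∘ j = id`. -/
theorem stmt12 {X : Type} [LinearOrder X] [Countable X] [Nonempty X] :
    ∃ (j : X ↪o ℚ) (r : ℚ → X), Monotone r ∧ ∀ x : X, r (j x) = x := by
  obtain ⟨φ⟩ : Nonempty ((X ×ₗ ℚ) ≃o ℚ) := Order.iso_of_countable_dense _ _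
  exact ⟨(Prod.Lex.embedLeft 0).trans φ.toOrderEmbedding, fun q ↦ (ofLex (φ.symm q)).1,
    Prod.Lex.monotone_fst_ofLex.comp φ.symm.monotone, fun x ↦ by simp⟩
end
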